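/- arXiv:2401.06089 — 4 statements merged into one kernel-verified Lean document; each statement's English description precedes it below -/
import Mathlib

section
/- Let T_c be an edge contraction of a tree T (i.e., obtained by contracting a subset of edges of T). For any two edges e_i, e_j retained in T_c, if e_i is a dendrogram ancestor of e_j in T, then e_i is a dendrogram ancestor of e_j in T_c. -/
/-!
A walk in `T` projects to a walk in `T_c` by dropping the steps whose endpoints get merged. As `T`
is acyclic, every edge is a bridge, so the merged steps are exactly the contracted edges and
distinct surviving edges keep distinct images. Hence every edge on the `T_c`-path between the
images of `e_j` and `e_i` is the image of a surviving edge on the `T`-path between `e_j` and `e_i`,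
and its weight is at most that of `e_i`.
-/

open SimpleGraph

variable {V : Type*}

/-- The set of edges lying on the (unique) path between the edges `e` and `f`
of a tree `G`: the edges that belong to every walk traversing both `e` and
`f` (inclusive of `e` and `f` themselves). -/
def betweenEdges (G : SimpleGraph V) (e f : Sym2 V) : Set (Sym2 V) :=
  {g | g ∈ G.edgeSet ∧
    ∀ (a b : V) (p : G.Walk a b), e ∈ p.edges → f ∈ p.edges → g ∈ p.edges}

/-- `f` is an ancestor of `e` (each edge being an ancestor of itself) in the
single-linkage dendrogram of the weighted tree `(G, w)`, built top-down by
recursively removing the heaviest edge of each connected component: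
equivalently, `f` is the heaviest edge on the path between `e` and `f`. -/
def IsAncestor (G : SimpleGraph V) (w : Sym2 V → ℝ) (f e : Sym2 V) : Prop :=
  e ∈ G.edgeSet ∧ f ∈ G.edgeSet ∧ ∀ g ∈ betweenEdges G e f, w g ≤ w f

/-- The equivalence on vertices generated by identifying the endpoints of each
contracted edge (the edges of `G` belonging to `S`). -/
def contractSetoid (G : SimpleGraph V) (S : Set (Sym2 V)) : Setoid V :=
  ⟨Relation.EqvGen (fun u v => G.Adj u v ∧ s(u, v) ∈ S),
    Relation.EqvGen.is_equivalence _⟩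

/-- The tree obtained from `G` by contracting the edges in `S`: the surviving
edges are the edges of `G` not in `S`, viewed between the merged
supervertices. -/
def contractGraph (G : SimpleGraph V) (S : Set (Sym2 V)) :
    SimpleGraph (Quotient (contractSetoid G S)) where
  Adj x y := x ≠ y ∧ ∃ u v : V, Quotient.mk (contractSetoid G S) u = x ∧
      Quotient.mk (contractSetoid G S) v = y ∧ G.Adj u v ∧ s(u, v) ∉ S
  symm := by
    constructor
    rintro x y ⟨hxy, u, v, hu, hv, hadj, hS⟩
    exact ⟨hxy.symm, v, u, hv, hu, hadj.symm, by rwa [Sym2.eq_swap]⟩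
  loopless := ⟨fun x h => h.1 rfl⟩

/-- The image of an edge of `G` in the contracted tree. -/
def contractEdge (G : SimpleGraph V) (S : Set (Sym2 V)) :
    Sym2 V → Sym2 (Quotient (contractSetoid G S)) :=
  Sym2.map (Quotient.mk (contractSetoid G S))

section Contraction

variable {G : SimpleGraph V} {S : Set (Sym2 V)}

@[simp]
lemma contractEdge_mk (u v : V) : contractEdge G S s(u, v) =
    s(Quotient.mk (contractSetoid G S) u, Quotient.mk (contractSetoid G S) v) :=
  Sym2.map_mk _ _ _

lemma SimpleGraph.IsAcyclic.mem_edges_of_adj (hG : G.IsAcyclic) {u v : V} (h : G.Adj u v)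
    (q : G.Walk u v) : s(u, v) ∈ q.edges :=
  isBridge_iff_forall_walk_mem_edges.1 (isAcyclic_iff_forall_adj_isBridge.1 hG h) q

lemma exists_walk_edges_subset_of_mk_eq_mk {u v : V}
    (h : Quotient.mk (contractSetoid G S) u = Quotient.mk (contractSetoid G S) v) :
    ∃ q : G.Walk u v, ∀ e ∈ q.edges, e ∈ S := by
  have hr : Relation.EqvGen (fun a b => G.Adj a b ∧ s(a, b) ∈ S) u v := Quotient.exact h
  clear h
  induction hr with
  | rel a b hab => exact ⟨hab.1.toWalk, by simp [hab.2]⟩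
  | refl a => exact ⟨.nil, by simp⟩
  | symm a b _ ih =>
    obtain ⟨q, hq⟩ := ih
    exact ⟨q.reverse, by simpa using hq⟩
  | trans a b c _ _ ih₁ ih₂ =>
    obtain ⟨q₁, hq₁⟩ := ih₁
    obtain ⟨q₂, hq₂⟩ := ih₂
    exact ⟨q₁.append q₂, by simpa [or_imp, forall_and] using ⟨hq₁, hq₂⟩⟩

lemma contractEdge_isDiag_iff (hG : G.IsAcyclic) {e : Sym2 V} (he : e ∈ G.edgeSet) :
    (contractEdge G S e).IsDiag ↔ e ∈ S := by
  induction e with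
  | h u v =>
    rw [contractEdge_mk, Sym2.mk_isDiag_iff]
    refine ⟨fun huv => ?_, fun huvS => Quotient.sound (.rel _ _ ⟨he, huvS⟩)⟩
    obtain ⟨q, hq⟩ := exists_walk_edges_subset_of_mk_eq_mk huv
    exact hq _ (hG.mem_edges_of_adj he q)

lemma mem_edgeSet_contractGraph (hG : G.IsAcyclic) {e' : Sym2 (Quotient (contractSetoid G S))} :
    e' ∈ (contractGraph G S).edgeSet ↔ ∃ e ∈ G.edgeSet, e ∉ S ∧ contractEdge G S e = e' := by
  constructor
  · induction e' using Sym2.inductionOn with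
    | hf x y =>
      rintro ⟨-, u, v, rfl, rfl, huv, huvS⟩
      exact ⟨s(u, v), huv, huvS, contractEdge_mk u v⟩
  · rintro ⟨e, he, heS, rfl⟩
    induction e with
    | h u v =>
      have hne := mt (contractEdge_isDiag_iff (S := S) hG he).1 heS
      rw [contractEdge_mk, Sym2.mk_isDiag_iff] at hne
      exact ⟨hne, u, v, rfl, rfl, he, heS⟩

lemma edge_eq_of_mk_eq_mk (hG : G.IsAcyclic) {a b u v : V} (hab : G.Adj a b)
    (habS : s(a, b) ∉ S) (huv : G.Adj u v)
    (hau : Quotient.mk (contractSetoid G S) a = Quotient.mk (contractSetoid G S) u)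
    (hbv : Quotient.mk (contractSetoid G S) b = Quotient.mk (contractSetoid G S) v) :
    s(a, b) = s(u, v) := by
  obtain ⟨q₁, hq₁⟩ := exists_walk_edges_subset_of_mk_eq_mk hau
  obtain ⟨q₂, hq₂⟩ := exists_walk_edges_subset_of_mk_eq_mk hbv.symm
  have hmem := hG.mem_edges_of_adj hab (q₁.append (.cons huv q₂))
  simp only [Walk.edges_append, Walk.edges_cons, List.mem_append, List.mem_cons] at hmem
  rcases hmem with h | h | h
  · exact absurd (hq₁ _ h) habS
  · exact h
  · exact absurd (hq₂ _ h) habS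

lemma contractEdge_injOn (hG : G.IsAcyclic) :
    Set.InjOn (contractEdge G S) (G.edgeSet \ S) := by
  rintro e ⟨he, heS⟩ f ⟨hf, -⟩ hef
  induction e with | h a b =>
  induction f with | h u v =>
  rw [contractEdge_mk, contractEdge_mk, Sym2.eq_iff] at hef
  rcases hef with ⟨hau, hbv⟩ | ⟨hav, hbu⟩
  · exact edge_eq_of_mk_eq_mk hG he heS hf hau hbv
  · exact (edge_eq_of_mk_eq_mk hG he heS hf.symm hav hbu).trans Sym2.eq_swap

lemma contractGraph_adj_mk {a c : V} (h : G.Adj a c)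
    (hac : Quotient.mk (contractSetoid G S) a ≠ Quotient.mk (contractSetoid G S) c) :
    (contractGraph G S).Adj (Quotient.mk (contractSetoid G S) a)
      (Quotient.mk (contractSetoid G S) c) :=
  ⟨hac, a, c, rfl, rfl, h, fun hS => hac (Quotient.sound (.rel _ _ ⟨h, hS⟩))⟩

open Classical in
noncomputable def contractWalk : ∀ {a b : V}, G.Walk a b →
    (contractGraph G S).Walk (Quotient.mk (contractSetoid G S) a)
      (Quotient.mk (contractSetoid G S) b)
  | _, _, .nil => .nil
  | a, _, .cons (v := c) h q =>
    if hac : Quotient.mk (contractSetoid G S) a = Quotient.mk (contractSetoid G S) c then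
      (contractWalk q).copy hac.symm rfl
    else
      .cons (contractGraph_adj_mk h hac) (contractWalk q)

lemma mem_edges_contractWalk {a b : V} (p : G.Walk a b)
    {e' : Sym2 (Quotient (contractSetoid G S))} :
    e' ∈ (contractWalk p).edges ↔ ¬ e'.IsDiag ∧ ∃ e ∈ p.edges, contractEdge G S e = e' := by
  induction p with
  | nil => simp [contractWalk]
  | @cons a c b h q ih =>
    simp only [contractWalk, Walk.edges_cons, List.mem_cons, or_and_right, exists_or,
      exists_eq_left]
    split_ifs with hac
    · have hdiag : (contractEdge G S s(a, c)).IsDiag := by simpa using hac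
      rw [Walk.edges_copy, ih]
      grind
    · have hnd : ¬ (contractEdge G S s(a, c)).IsDiag := by simpa using hac
      rw [Walk.edges_cons, List.mem_cons, ih, ← contractEdge_mk]
      grind

lemma betweenEdges_contractGraph_subset (hG : G.IsAcyclic) {e f : Sym2 V}
    (heS : e ∉ S) (hfS : f ∉ S) :
    betweenEdges (contractGraph G S) (contractEdge G S e) (contractEdge G S f) ⊆
      contractEdge G S '' (betweenEdges G e f \ S) := by
  rintro g' ⟨hg', hg'_walks⟩
  obtain ⟨g, hg, hgS, rfl⟩ := (mem_edgeSet_contractGraph hG).1 hg'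
  refine ⟨g, ⟨⟨hg, fun a b p hep hfp => ?_⟩, hgS⟩, rfl⟩
  have surviving_mem {x : Sym2 V} (hx : x ∈ p.edges) (hxS : x ∉ S) :
      contractEdge G S x ∈ (contractWalk p).edges :=
    (mem_edges_contractWalk p).2
      ⟨(contractEdge_isDiag_iff hG (p.edges_subset_edgeSet hx)).not.2 hxS, x, hx, rfl⟩
  obtain ⟨hnd, g₀, hg₀, hg₀g⟩ := (mem_edges_contractWalk p).1
    (hg'_walks _ _ (contractWalk p) (surviving_mem hep heS) (surviving_mem hfp hfS))
  have hg₀E := p.edges_subset_edgeSet hg₀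
  have hg₀S : g₀ ∉ S := fun h => hnd (hg₀g ▸ (contractEdge_isDiag_iff hG hg₀E).2 h)
  rwa [← contractEdge_injOn hG ⟨hg₀E, hg₀S⟩ ⟨hg, hgS⟩ hg₀g]

end Contraction

theorem ancestor_of_contraction_general (G : SimpleGraph V) (hG : G.IsTree)
    (w : Sym2 V → ℝ)
    (S : Set (Sym2 V))
    (w' : Sym2 (Quotient (contractSetoid G S)) → ℝ)
    (hw' : ∀ e ∈ G.edgeSet, e ∉ S → w' (contractEdge G S e) = w e)
    (ei ej : Sym2 V)
    (hiS : ei ∉ S) (hjS : ej ∉ S)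
    (hanc : IsAncestor G w ei ej) :
    IsAncestor (contractGraph G S) w' (contractEdge G S ei)
      (contractEdge G S ej) := by
  obtain ⟨hej, hei, hmax⟩ := hanc
  have hA := hG.isAcyclic
  refine ⟨(mem_edgeSet_contractGraph hA).2 ⟨ej, hej, hjS, rfl⟩,
    (mem_edgeSet_contractGraph hA).2 ⟨ei, hei, hiS, rfl⟩, ?_⟩
  intro g' hg'
  obtain ⟨g, ⟨hg, hgS⟩, rfl⟩ := betweenEdges_contractGraph_subset hA hjS hiS hg'
  rw [hw' g hg.1 hgS, hw' ei hei hiS]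
  exact hmax g hg

/-- Let `T_c` be an edge contraction of a tree `T` with distinct edge weights
(obtained by contracting the edges in `S`). For any two edges retained in
`T_c`, if `e_i` is a dendrogram ancestor of `e_j` in `T`, then `e_i` is also a
dendrogram ancestor of `e_j` in `T_c`. -/
theorem ancestor_of_contraction (G : SimpleGraph V) (hG : G.IsTree)
    (w : Sym2 V → ℝ) (hw : Set.InjOn w G.edgeSet)
    (S : Set (Sym2 V)) (hS : S ⊆ G.edgeSet)
    (w' : Sym2 (Quotient (contractSetoid G S)) → ℝ)
    (hw' : ∀ e ∈ G.edgeSet, e ∉ S → w' (contractEdge G S e) = w e)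
    (ei ej : Sym2 V) (hei : ei ∈ G.edgeSet) (hej : ej ∈ G.edgeSet)
    (hiS : ei ∉ S) (hjS : ej ∉ S)
    (hanc : IsAncestor G w ei ej) :
    IsAncestor (contractGraph G S) w' (contractEdge G S ei)
      (contractEdge G S ej) :=
  ancestor_of_contraction_general G hG w S w' hw' ei ej hiS hjS hanc
end

section
/- Contracting all non-alpha edges of a tree yields a lineage-preserving contraction: for any two edges e_i ≠ e_j of the tree, the lowest common dendrogram ancestor LCDA(e_i, e_j), if distinct from both e_i and e_j, is an alpha-edge. -/
open SimpleGraph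

variable {V : Type*}

/-- `m` is the lowest common dendrogram ancestor (LCDA) of edges `e` and `f`:
the deepest node of the dendrogram that is an ancestor of both. -/
def IsLCDA (G : SimpleGraph V) (w : Sym2 V → ℝ) (m e f : Sym2 V) : Prop :=
  IsAncestor G w m e ∧ IsAncestor G w m f ∧
    ∀ g, IsAncestor G w g e → IsAncestor G w g f → IsAncestor G w g m

/-- The edge `e` is the dendrogram parent of the vertex `v`: `v` is an
endpoint of `e` and, in the top-down process removing edges in decreasing
weight order, the removal of `e` first disconnects `v` into a singleton
component, i.e. `v` is isolated once all edges of weight `≥ w e` are removed. -/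
def IsVertexParent (G : SimpleGraph V) (w : Sym2 V → ℝ) (e : Sym2 V) (v : V) :
    Prop :=
  e ∈ G.edgeSet ∧ v ∈ e ∧
    ∀ u : V, (G.deleteEdges {f | w e ≤ w f}).Reachable v u → u = v

/-- An edge of the tree is an α-edge of the dendrogram if it has no
vertex-node child, i.e. both of its dendrogram children are edge-nodes. -/
def IsAlphaEdge (G : SimpleGraph V) (w : Sym2 V → ℝ) (e : Sym2 V) : Prop :=
  e ∈ G.edgeSet ∧ ∀ v : V, ¬ IsVertexParent G w e v


section Aux

variable [DecidableEq V]

set_option linter.unusedSectionVars false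

private lemma walk_eq_of_isPath {G : SimpleGraph V} (hG : G.IsAcyclic) {x y : V}
    {p q : G.Walk x y} (hp : p.IsPath) (hq : q.IsPath) : p = q :=
  congrArg Subtype.val (hG.path_unique ⟨p, hp⟩ ⟨q, hq⟩)

private lemma exists_walk_union {G : SimpleGraph V} {a b c d v : V}
    (p1 : G.Walk a b) (p2 : G.Walk c d) (h1 : v ∈ p1.support) (h2 : v ∈ p2.support) :
    ∃ W : G.Walk c d, ∀ z, z ∈ W.edges ↔ z ∈ p1.edges ∨ z ∈ p2.edges := by
  refine ⟨(p2.takeUntil v h2).append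
    ((((p1.takeUntil v h1).reverse.append (p1.takeUntil v h1)).append
      ((p1.dropUntil v h1).append (p1.dropUntil v h1).reverse)).append (p2.dropUntil v h2)), ?_⟩
  have e1 : (p1.takeUntil v h1).edges ++ (p1.dropUntil v h1).edges = p1.edges := by
    rw [← Walk.edges_append, Walk.take_spec]
  have e2 : (p2.takeUntil v h2).edges ++ (p2.dropUntil v h2).edges = p2.edges := by
    rw [← Walk.edges_append, Walk.take_spec]
  intro z
  rw [← e1, ← e2]
  simp only [Walk.edges_append, Walk.edges_reverse, List.mem_append, List.mem_reverse]
  tauto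

private lemma exists_path_through_edge {G : SimpleGraph V} (hG : G.IsTree) {a b : V}
    (hab : G.Adj a b) (c : V) :
    ∃ (x : V) (P : G.Walk x c), P.IsPath ∧ s(a, b) ∈ P.edges ∧ x ∈ s(a, b) := by
  obtain ⟨Q, hQ, -⟩ := hG.existsUnique_path b c
  by_cases ha : a ∈ Q.support
  · refine ⟨b, Q, hQ, ?_, Sym2.mem_mk_right a b⟩
    have h1 : (Q.takeUntil a ha).IsPath := hQ.takeUntil ha
    have h2 : (Walk.cons hab.symm Walk.nil : G.Walk b a).IsPath := by simp [hab.ne']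
    have heq := walk_eq_of_isPath hG.IsAcyclic h1 h2
    have hmem : s(a, b) ∈ (Q.takeUntil a ha).edges := by
      rw [heq]; simp [Sym2.eq_swap]
    exact Q.edges_takeUntil_subset ha hmem
  · exact ⟨a, Walk.cons hab Q, hQ.cons ha, by simp, Sym2.mem_mk_left a b⟩

private lemma exists_path_through_two_edges {G : SimpleGraph V} (hG : G.IsTree)
    {e f : Sym2 V} (he : e ∈ G.edgeSet) (hf : f ∈ G.edgeSet) :
    ∃ (x y : V) (P : G.Walk x y), P.IsPath ∧ e ∈ P.edges ∧ f ∈ P.edges ∧ x ∈ e ∧ y ∈ f := by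
  revert he hf
  induction e using Sym2.ind with | _ a b =>
  induction f using Sym2.ind with | _ c d =>
  intro he hf
  have hab : G.Adj a b := G.mem_edgeSet.mp he
  have hcd : G.Adj c d := G.mem_edgeSet.mp hf
  obtain ⟨x, P1, hP1, he1, hx⟩ := exists_path_through_edge hG hab c
  by_cases hd : d ∈ P1.support
  · refine ⟨x, c, P1, hP1, he1, ?_, hx, Sym2.mem_mk_left c d⟩
    have h1 : (P1.dropUntil d hd).IsPath := hP1.dropUntil hd
    have h2 : (Walk.cons hcd.symm Walk.nil : G.Walk d c).IsPath := by simp [hcd.ne']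
    have heq := walk_eq_of_isPath hG.IsAcyclic h1 h2
    have hmem : s(c, d) ∈ (P1.dropUntil d hd).edges := by
      rw [heq]; simp [Sym2.eq_swap]
    exact P1.edges_dropUntil_subset hd hmem
  · refine ⟨x, d, (Walk.cons hcd.symm P1.reverse).reverse, ?_, ?_, ?_, hx,
      Sym2.mem_mk_right c d⟩
    · exact (hP1.reverse.cons (by simpa using hd)).reverse
    · simp only [Walk.edges_reverse, List.mem_reverse, Walk.edges_cons, List.mem_cons]
      exact Or.inr (by simpa using he1)
    · simp only [Walk.edges_reverse, List.mem_reverse, Walk.edges_cons, List.mem_cons]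
      exact Or.inl (Sym2.eq_swap)

private lemma path_edges_subset_walk_edges {G : SimpleGraph V} (hG : G.IsTree)
    {x y a b : V} {P : G.Walk x y} (hP : P.IsPath) (W : G.Walk a b)
    (hx : x ∈ W.support) (hy : y ∈ W.support) : ∀ z ∈ P.edges, z ∈ W.edges := by
  have key : ∀ (Q : G.Walk x y), (∀ z ∈ Q.edges, z ∈ W.edges) → ∀ z ∈ P.edges, z ∈ W.edges := by
    intro Q hQ z hz
    have hPQ : P = Q.bypass := walk_eq_of_isPath hG.IsAcyclic hP Q.bypass_isPath
    exact hQ z (Q.edges_bypass_subset (hPQ ▸ hz))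
  by_cases hy2 : y ∈ (W.dropUntil x hx).support
  · exact key ((W.dropUntil x hx).takeUntil y hy2) (fun z hz =>
      W.edges_dropUntil_subset hx ((W.dropUntil x hx).edges_takeUntil_subset hy2 hz))
  · have hsupp : (W.takeUntil x hx).support ++ (W.dropUntil x hx).support.tail = W.support := by
      rw [← Walk.support_append, Walk.take_spec]
    have hy' := hy
    rw [← hsupp] at hy'
    have hy1 : y ∈ (W.takeUntil x hx).support := by
      rcases List.mem_append.mp hy' with h | h
      · exact h
      · exact absurd (List.mem_of_mem_tail h) hy2
    exact key ((W.takeUntil x hx).dropUntil y hy1).reverse (fun z hz => by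
      rw [Walk.edges_reverse, List.mem_reverse] at hz
      exact W.edges_takeUntil_subset hx ((W.takeUntil x hx).edges_dropUntil_subset hy1 hz))

private lemma betweenEdges_eq_path_edges {G : SimpleGraph V} (hG : G.IsTree)
    {e f : Sym2 V} {x y : V} {P : G.Walk x y} (hP : P.IsPath)
    (he : e ∈ P.edges) (hf : f ∈ P.edges) (hx : x ∈ e) (hy : y ∈ f) :
    betweenEdges G e f = {z | z ∈ P.edges} := by
  ext z
  constructor
  · intro hz
    exact hz.2 x y P he hf
  · intro hz
    refine ⟨P.edges_subset_edgeSet hz, fun a b W hWe hWf => ?_⟩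
    obtain ⟨x', hex⟩ := Sym2.mem_iff_exists.mp hx
    obtain ⟨y', hfy⟩ := Sym2.mem_iff_exists.mp hy
    have hxW : x ∈ W.support := W.fst_mem_support_of_mem_edges (hex ▸ hWe)
    have hyW : y ∈ W.support := W.fst_mem_support_of_mem_edges (hfy ▸ hWf)
    exact path_edges_subset_walk_edges hG hP W hxW hyW z hz

end Aux

/-- Contracting all non-α edges of a tree is lineage preserving: for any two
distinct edges `e_i ≠ e_j` of a tree with distinct edge weights, their lowest
common dendrogram ancestor, if distinct from both, is an α-edge. -/
theorem lcda_of_distinct_edges_isAlphaEdge (G : SimpleGraph V) (hG : G.IsTree)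
    (w : Sym2 V → ℝ) (hw : Set.InjOn w G.edgeSet)
    (ei ej : Sym2 V) (hei : ei ∈ G.edgeSet) (hej : ej ∈ G.edgeSet)
    (hne : ei ≠ ej) :
    ∀ g, IsLCDA G w g ei ej → g ≠ ei → g ≠ ej → IsAlphaEdge G w g := by
  classical
  intro g hLCDA hgi hgj
  obtain ⟨hAi, hAj, hmin⟩ := hLCDA
  have hgE : g ∈ G.edgeSet := hAi.2.1
  refine ⟨hgE, fun v hv => ?_⟩
  obtain ⟨-, hvg, hiso⟩ := hv
  obtain ⟨u, hgu⟩ := Sym2.mem_iff_exists.mp hvg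
  have hadjvu : G.Adj v u := G.mem_edgeSet.mp (hgu ▸ hgE)
  -- Every edge at `v` other than `g` is heavier than `g`.
  have hheavy : ∀ z ∈ G.edgeSet, v ∈ z → z ≠ g → w g < w z := by
    intro z hzE hvz hzg
    by_contra hle
    push_neg at hle
    have hlt : w z < w g := lt_of_le_of_ne hle (fun h => hzg (hw hzE hgE h))
    obtain ⟨u', hzu⟩ := Sym2.mem_iff_exists.mp hvz
    have hadj : G.Adj v u' := G.mem_edgeSet.mp (hzu ▸ hzE)
    have hadj' : (G.deleteEdges {f | w g ≤ w f}).Adj v u' := by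
      rw [SimpleGraph.deleteEdges_adj]
      refine ⟨hadj, fun hmem => ?_⟩
      rw [Set.mem_setOf_eq, ← hzu] at hmem
      exact absurd hlt (not_lt.mpr hmem)
    exact hadj.ne (hiso u' hadj'.reachable).symm
  have selfBetween : ∀ (e f : Sym2 V), e ∈ G.edgeSet → e ∈ betweenEdges G e f :=
    fun e f he => ⟨he, fun a b p hp _ => hp⟩
  -- The path `P` between `ei` and `ej`.
  obtain ⟨x, y, P, hP, hPei, hPej, hxei, hyej⟩ := exists_path_through_two_edges hG hei hej
  have hBE : betweenEdges G ei ej = {z | z ∈ P.edges} :=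
    betweenEdges_eq_path_edges hG hP hPei hPej hxei hyej
  -- All edges of `P` have weight at most `w g`.
  have hPle : ∀ z ∈ P.edges, w z ≤ w g := by
    intro z hz
    have hzB : z ∈ betweenEdges G ei ej := by rw [hBE]; exact hz
    by_cases hzi : z ∈ betweenEdges G ei g
    · exact hAi.2.2 z hzi
    · apply hAj.2.2 z
      have hzE := hzB.1
      have hns : ¬ ∀ (a b : V) (p : G.Walk a b), ei ∈ p.edges → g ∈ p.edges → z ∈ p.edges :=
        fun h => hzi ⟨hzE, h⟩
      push_neg at hns
      obtain ⟨a, b, p1, hp1i, hp1g, hp1z⟩ := hns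
      refine ⟨hzE, fun c d p2 hp2j hp2g => ?_⟩
      have hv1 : v ∈ p1.support := p1.fst_mem_support_of_mem_edges (hgu ▸ hp1g)
      have hv2 : v ∈ p2.support := p2.fst_mem_support_of_mem_edges (hgu ▸ hp2g)
      obtain ⟨W, hW⟩ := exists_walk_union p1 p2 hv1 hv2
      have hzW : z ∈ W.edges :=
        hzB.2 c d W ((hW ei).mpr (Or.inl hp1i)) ((hW ej).mpr (Or.inr hp2j))
      rcases (hW z).mp hzW with h | h
      · exact absurd h hp1z
      · exact h
  -- The heaviest edge `m` of `P` is a common ancestor, hence an ancestor of `g`,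
  -- hence equal to `g`.
  obtain ⟨m, hm, hmax⟩ :=
    P.edges.toFinset.exists_max_image w ⟨ei, List.mem_toFinset.mpr hPei⟩
  rw [List.mem_toFinset] at hm
  have hmax' : ∀ z ∈ P.edges, w z ≤ w m := fun z hz => hmax z (List.mem_toFinset.mpr hz)
  have hmE : m ∈ G.edgeSet := P.edges_subset_edgeSet hm
  have hmB : m ∈ betweenEdges G ei ej := by rw [hBE]; exact hm
  have hDi : IsAncestor G w m ei := by
    refine ⟨hei, hmE, fun z hz => ?_⟩
    have hzB : z ∈ betweenEdges G ei ej :=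
      ⟨hz.1, fun a b p hpi hpj => hz.2 a b p hpi (hmB.2 a b p hpi hpj)⟩
    exact hmax' z (by rwa [hBE] at hzB)
  have hDj : IsAncestor G w m ej := by
    refine ⟨hej, hmE, fun z hz => ?_⟩
    have hzB : z ∈ betweenEdges G ei ej :=
      ⟨hz.1, fun a b p hpi hpj => hz.2 a b p hpj (hmB.2 a b p hpi hpj)⟩
    exact hmax' z (by rwa [hBE] at hzB)
  have hAm : IsAncestor G w m g := hmin m hDi hDj
  have hgm : w g ≤ w m := hAm.2.2 g (selfBetween g m hgE)
  have hmg : m = g := hw hmE hgE (le_antisymm (hPle m hm) hgm)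
  have hgP : g ∈ P.edges := hmg ▸ hm
  -- Every edge of `P` containing `v` equals `g`.
  have honly : ∀ z ∈ P.edges, v ∈ z → z = g := by
    intro z hz hvz
    by_contra hzg
    exact absurd (hPle z hz) (not_le.mpr (hheavy z (P.edges_subset_edgeSet hz) hvz hzg))
  -- Split `P` at `v`.
  have hvP : v ∈ P.support := P.fst_mem_support_of_mem_edges (hgu ▸ hgP)
  have hsupp : (P.takeUntil v hvP).support ++ (P.dropUntil v hvP).support.tail = P.support := by
    rw [← Walk.support_append, Walk.take_spec]
  have hnodup : ((P.takeUntil v hvP).support ++ (P.dropUntil v hvP).support.tail).Nodup := by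
    rw [hsupp]; exact hP.support_nodup
  have hTD : ¬ (g ∈ (P.takeUntil v hvP).edges ∧ g ∈ (P.dropUntil v hvP).edges) := by
    rintro ⟨h1, h2⟩
    have hu1 : u ∈ (P.takeUntil v hvP).support :=
      (P.takeUntil v hvP).snd_mem_support_of_mem_edges (hgu ▸ h1)
    have hu2 : u ∈ (P.dropUntil v hvP).support :=
      (P.dropUntil v hvP).snd_mem_support_of_mem_edges (hgu ▸ h2)
    have hu2' : u ∈ (P.dropUntil v hvP).support.tail := by
      rw [(P.dropUntil v hvP).support_eq_cons] at hu2
      rcases List.mem_cons.mp hu2 with h | h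
      · exact absurd h hadjvu.ne'
      · exact h
    exact (List.disjoint_of_nodup_append hnodup) hu1 hu2'
  by_cases hTnil : (P.takeUntil v hvP).Nil
  · have hxv : x = v := hTnil.eq
    exact hgi ((honly ei hPei (hxv ▸ hxei)).symm)
  · by_cases hDnil : (P.dropUntil v hvP).Nil
    · have hyv : v = y := hDnil.eq
      exact hgj ((honly ej hPej (hyv ▸ hyej)).symm)
    · have hTrev : ¬ (P.takeUntil v hvP).reverse.Nil := fun h => hTnil (by
        rwa [Walk.nil_iff_length_eq, Walk.length_reverse, ← Walk.nil_iff_length_eq] at h)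
      obtain ⟨u1, hadj1, q1, hq1⟩ := Walk.not_nil_iff.mp hTrev
      obtain ⟨u2, hadj2, q2, hq2⟩ := Walk.not_nil_iff.mp hDnil
      have hz1 : s(v, u1) ∈ (P.takeUntil v hvP).edges := by
        rw [← List.mem_reverse, ← Walk.edges_reverse, hq1]
        simp
      have hz2 : s(v, u2) ∈ (P.dropUntil v hvP).edges := by
        rw [hq2]; simp
      have hg1 : s(v, u1) = g :=
        honly _ (P.edges_takeUntil_subset hvP hz1) (Sym2.mem_mk_left _ _)
      have hg2 : s(v, u2) = g :=
        honly _ (P.edges_dropUntil_subset hvP hz2) (Sym2.mem_mk_left _ _)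
      exact hTD ⟨hg1 ▸ hz1, hg2 ▸ hz2⟩
end

section
/- In the single-linkage dendrogram of a tree, the parent of a vertex v is the lightest edge incident to v (equivalently, under descending-weight ordering, the incident edge with maximal index). -/
open SimpleGraph

variable {V : Type*}

/-- In the single-linkage dendrogram of a tree with distinct edge weights, the
dendrogram parent of a vertex `v` is the lightest edge incident to `v`. -/
theorem isVertexParent_iff_lightest_incident (G : SimpleGraph V)
    (hG : G.IsTree) (w : Sym2 V → ℝ) (hw : Set.InjOn w G.edgeSet)
    (e : Sym2 V) (v : V) :
    IsVertexParent G w e v ↔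
      (e ∈ G.edgeSet ∧ v ∈ e ∧ ∀ f ∈ G.edgeSet, v ∈ f → w e ≤ w f) := by
  constructor
  · rintro ⟨he, hv, hiso⟩
    refine ⟨he, hv, fun f hf hvf => ?_⟩
    by_contra hlt
    push_neg at hlt
    -- f survives deletion, giving v a neighbor, contradicting isolation
    obtain ⟨u, hu⟩ : ∃ u, G.Adj v u ∧ s(v, u) = f := by
      refine ⟨Sym2.Mem.other hvf, ?_, Sym2.other_spec hvf⟩
      rw [← SimpleGraph.mem_edgeSet, Sym2.other_spec hvf]; exact hf
    have hadj : (G.deleteEdges {f | w e ≤ w f}).Adj v u := by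
      rw [SimpleGraph.deleteEdges_adj]
      exact ⟨hu.1, by simp [hu.2]; linarith⟩
    exact hadj.ne' (hiso u hadj.reachable)
  · rintro ⟨he, hv, hlight⟩
    refine ⟨he, hv, fun u hu => ?_⟩
    by_contra hne
    obtain ⟨p⟩ := hu
    cases p with
    | nil => exact hne rfl
    | cons h q =>
      rename_i b
      rw [SimpleGraph.deleteEdges_adj] at h
      have h1 : w e ≤ w s(v, b) :=
        hlight _ h.1 (Sym2.mem_mk_left v b)
      exact h.2 h1
end

section
/- An edge e = (u, v) of a tree is an alpha-edge of the dendrogram (both dendrogram children of e are edge-nodes) if and only if e is neither the lightest edge incident to u nor the lightest edge incident to v. -/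
open SimpleGraph

variable {V : Type*}

lemma isVertexParent_iff_lightest (G : SimpleGraph V) (w : Sym2 V → ℝ)
    (e : Sym2 V) (x : V) (he : e ∈ G.edgeSet) (hx : x ∈ e) :
    IsVertexParent G w e x ↔ ∀ f ∈ G.edgeSet, x ∈ f → w e ≤ w f := by
  constructor
  · rintro ⟨-, -, hiso⟩ f hf hxf
    by_contra hlt
    push_neg at hlt
    obtain ⟨y, rfl⟩ := Sym2.mem_iff_exists.mp hxf
    have hadj : G.Adj x y := hf
    have hadj' : (G.deleteEdges {f | w e ≤ w f}).Adj x y := by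
      rw [SimpleGraph.deleteEdges_adj]
      exact ⟨hadj, fun h => absurd h (not_le.mpr hlt)⟩
    exact hadj.ne' (hiso y hadj'.reachable)
  · intro h
    refine ⟨he, hx, fun t ht => ?_⟩
    obtain ⟨p⟩ := ht
    cases p with
    | nil => rfl
    | cons hadj p =>
      rw [SimpleGraph.deleteEdges_adj] at hadj
      exact absurd (h _ hadj.1 (Sym2.mem_mk_left _ _)) hadj.2

/-- An edge `e = (u, v)` of a tree with distinct edge weights is an α-edge of
the dendrogram (both of its dendrogram children are edge-nodes) if and only if
`e` is neither the lightest edge incident to `u` nor the lightest edge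
incident to `v`. -/
theorem isAlphaEdge_iff_not_lightest (G : SimpleGraph V) (hG : G.IsTree)
    (w : Sym2 V → ℝ) (hw : Set.InjOn w G.edgeSet)
    (u v : V) (huv : G.Adj u v) :
    IsAlphaEdge G w s(u, v) ↔
      (¬ ∀ f ∈ G.edgeSet, u ∈ f → w s(u, v) ≤ w f) ∧
        (¬ ∀ f ∈ G.edgeSet, v ∈ f → w s(u, v) ≤ w f) := by
  have he : s(u, v) ∈ G.edgeSet := huv
  constructor
  · rintro ⟨-, h⟩
    exact ⟨fun hl => h u ((isVertexParent_iff_lightest G w _ u he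
        (Sym2.mem_mk_left _ _)).mpr hl),
      fun hl => h v ((isVertexParent_iff_lightest G w _ v he
        (Sym2.mem_mk_right _ _)).mpr hl)⟩
  · rintro ⟨hu, hv⟩
    refine ⟨he, fun x hxp => ?_⟩
    have hx : x ∈ s(u, v) := hxp.2.1
    rw [Sym2.mem_iff] at hx
    rcases hx with rfl | rfl
    · exact hu ((isVertexParent_iff_lightest G w _ x he
        (Sym2.mem_mk_left _ _)).mp hxp)
    · exact hv ((isVertexParent_iff_lightest G w _ x he
        (Sym2.mem_mk_right _ _)).mp hxp)
end
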